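/- Suppose u ∈ A₀(G) is the identity and a product P = ∏_{k=1}^{N} (u + x·(H₀) + c_k) in the Burnside ring satisfies: (H₀) is a maximal element among orbit types appearing in all c_k (so coeff^{H₀}(c_k) = 0 and coeff^{H₀}(c_j · (H₀)) = 0, coeff^{H₀}(c_j·c_k) = 0 for all j,k), (H₀)·(H₀) = |W(H₀)|·(H₀) + d with coeff^{H₀}(d) = 0, and x·|W(H₀)| = 2. Then coeff^{H₀}(P) ≡ N·x (mod 2x); in particular if N is odd then coeff^{H₀}(P) ≠ 0. -/

import Mathlib

/-!
Modulo the ideal `I` the correction terms vanish and `h = H₀` satisfies `h * h = w • h`, so the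
product becomes `(1 + x • h) ^ N`. Since `x * w = 2`, multiplying `1 + (m * x) • h` by `1 + x • h`
gives `1 + ((3 * m + 1) * x) • h`, and `3 * m + 1` has the opposite parity of `m`. Hence
`(1 + x • h) ^ N = 1 + (m * x) • h` with `m ≡ N [ZMOD 2]`, and `coeff`, which kills `I`, reads off
`m * x`.
-/

theorem pow_one_add_zsmul_of_mul_self_eq {S : Type*} [CommRing S] {h : S} {w x : ℤ}
    (hh : h * h = w • h) (hxw : x * w = 2) (N : ℕ) :
    ∃ m : ℤ, m ≡ N [ZMOD 2] ∧ (1 + x • h) ^ N = 1 + (m * x) • h := by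
  induction N with
  | zero => exact ⟨0, rfl, by simp⟩
  | succ n ih =>
    obtain ⟨m, hm, hpow⟩ := ih
    refine ⟨3 * m + 1, ?_, ?_⟩
    · unfold Int.ModEq at hm ⊢
      push_cast
      omega
    · have hxw' : (x : S) * w = 2 := mod_cast congrArg (Int.cast : ℤ → S) hxw
      rw [pow_succ, hpow]
      simp only [zsmul_eq_mul] at hh ⊢
      push_cast
      linear_combination (m * x * x : S) * hh + (m * x : S) * h * hxw'

theorem map_eq_of_quotient_mk_eq {R A F : Type*} [CommRing R] [AddCommGroup A] [FunLike F R A]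
    [AddMonoidHomClass F R A] {I : Ideal R} (f : F) (hf : ∀ r ∈ I, f r = 0) {a b : R}
    (hab : Ideal.Quotient.mk I a = Ideal.Quotient.mk I b) : f a = f b := by
  rw [← sub_eq_zero, ← map_sub]
  exact hf _ (Ideal.Quotient.eq.mp hab)

theorem stmt_14_general (R : Type*) [CommRing R] (coeff : R →ₗ[ℤ] ℤ)
    (H₀ : R) (hcoeff1 : coeff 1 = 0) (hcoeffH : coeff H₀ = 1)
    (w : ℤ) (x : ℤ) (hxw : x * w = 2)
    (I : Ideal R) (hI : ∀ r ∈ I, coeff r = 0 ∧ coeff (r * H₀) = 0)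
    (d : R) (hd : d ∈ I) (hsq : H₀ * H₀ = w • H₀ + d)
    (N : ℕ) (c : Fin N → R) (hc : ∀ k, c k ∈ I) :
    Int.ModEq (2 * x) (coeff (∏ k, (1 + x • H₀ + c k))) ((N : ℤ) * x) ∧
    (Odd N → coeff (∏ k, (1 + x • H₀ + c k)) ≠ 0) := by
  set q := Ideal.Quotient.mk I
  have hh : q H₀ * q H₀ = w • q H₀ := by
    rw [← map_mul, hsq, map_add, map_zsmul, Ideal.Quotient.eq_zero_iff_mem.mpr hd, add_zero]
  obtain ⟨m, hm, hpow⟩ := pow_one_add_zsmul_of_mul_self_eq hh hxw N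
  have hfactor (k : Fin N) : q (1 + x • H₀ + c k) = 1 + x • q H₀ := by
    rw [map_add, Ideal.Quotient.eq_zero_iff_mem.mpr (hc k), add_zero, map_add, map_one, map_zsmul]
  have hP : q (∏ k, (1 + x • H₀ + c k)) = q (1 + (m * x) • H₀) := by
    rw [map_prod, Finset.prod_congr rfl fun k _ => hfactor k, Finset.prod_const, Finset.card_univ,
      Fintype.card_fin, hpow, map_add, map_one, map_zsmul]
  have hcoeffP : coeff (∏ k, (1 + x • H₀ + c k)) = m * x := by
    rw [map_eq_of_quotient_mk_eq coeff (fun r hr => (hI r hr).1) hP, map_add, map_zsmul,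
      hcoeff1, hcoeffH, zero_add, smul_eq_mul, mul_one]
  rw [hcoeffP]
  refine ⟨Int.ModEq.mul_right' hm, fun hN => mul_ne_zero ?_ ?_⟩
  · obtain ⟨j, rfl⟩ := hN
    unfold Int.ModEq at hm
    push_cast at hm
    omega
  · rintro rfl
    simp at hxw

/-- Abstract version of the key Burnside ring computation: in the Burnside ring
(a commutative ring `R` with identity `1 = (G)`), let `coeff` extract the integer
coefficient of the generator `H₀ = (H₀)` (so `coeff 1 = 0`, `coeff H₀ = 1`), let
the correction terms `c k` lie in an ideal `I` on which `coeff` and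
`coeff (·* H₀)` vanish (maximality of `(H₀)`), suppose
`H₀·H₀ = |W(H₀)|·H₀ + d` with `d ∈ I`, and `x·|W(H₀)| = 2`.  Then for
`P = ∏_{k=1}^N (1 + x·H₀ + c k)` one has `coeff P ≡ N·x (mod 2x)`; in particular
if `N` is odd then `coeff P ≠ 0`. -/
theorem stmt_14 (R : Type*) [CommRing R] (coeff : R →ₗ[ℤ] ℤ)
    (H₀ : R) (hcoeff1 : coeff 1 = 0) (hcoeffH : coeff H₀ = 1)
    (w : ℤ) (hw : w = 1 ∨ w = 2) (x : ℤ) (hxw : x * w = 2)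
    (I : Ideal R) (hI : ∀ r ∈ I, coeff r = 0 ∧ coeff (r * H₀) = 0)
    (d : R) (hd : d ∈ I) (hsq : H₀ * H₀ = w • H₀ + d)
    (N : ℕ) (c : Fin N → R) (hc : ∀ k, c k ∈ I) :
    Int.ModEq (2 * x) (coeff (∏ k, (1 + x • H₀ + c k))) ((N : ℤ) * x) ∧
    (Odd N → coeff (∏ k, (1 + x • H₀ + c k)) ≠ 0) :=
  stmt_14_general R coeff H₀ hcoeff1 hcoeffH w x hxw I hI d hd hsq N c hc
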